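/- The stopped process n ↦ M(min{n, T}), where M(n) = A(n)·B(n)·C(n)/φ(A(n),C(n)) + n/4, is a supermartingale with respect to the filtration (F_n), i.e. E[M(min{n+1, T}) | F_n] ≤ M(min{n, T}) for every n ≥ 0. -/

import Mathlib

/-!
Put `f (x, y, z) = x y z / φ (x, z)`. Off the coordinate planes, a case analysis on `z - x`
(for `|z - x| ≤ 1` the point or a neighbour lies on the diagonal `x = z`, where `φ` is not `max`)
shows that the average of `f` over the four neighbours of a point is at most `f - 1/4`. The
walk stopped on the planes, paired with its clock, is a Markov chain driven by the independent
steps, so conditioning on the past replaces the next value of `f + clock / 4` by that average: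
this is the supermartingale inequality.

Since `T` is an `sInf`, it is `0` on paths that never reach a plane, so one also needs that the
planes are reached almost surely. The expectation of `f + clock / 4` along the stopped walk stays
below `f (a, b, c)`, while on a path that never stops it is at least `n / 4`; by Markov's
inequality such paths form a null set.
-/

open MeasureTheory ProbabilityTheory
open scoped ENNReal

/-- The function `φ` from the paper (on integers): `φ (x, y) = max (x, y)` if `x ≠ y`
and `φ (x, x) = 2x² / (2x - 1)`. -/
noncomputable def phi (x y : ℤ) : ℝ :=
  if x = y then 2 * (x : ℝ) ^ 2 / (2 * (x : ℝ) - 1) else max (x : ℝ) (y : ℝ)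

noncomputable def potential (p : ℤ × ℤ × ℤ) : ℝ :=
  ((p.1 * p.2.1 * p.2.2 : ℤ) : ℝ) / phi p.1 p.2.2

def steps : Finset (ℤ × ℤ × ℤ) := {(-1, 0, 0), (1, -1, 0), (0, 1, -1), (0, 0, 1)}

section Potential

variable {x y z : ℤ}

lemma phi_nonneg (hx : 0 ≤ x) (hz : 0 ≤ z) : 0 ≤ phi x z := by
  unfold phi
  split_ifs with h
  · subst h
    rcases hx.eq_or_lt with rfl | hx
    · simp
    · have : (1 : ℝ) ≤ x := by exact_mod_cast hx
      exact div_nonneg (by positivity) (by linarith)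
  · exact le_max_of_le_left (by exact_mod_cast hx)

lemma potential_nonneg (hx : 0 ≤ x) (hy : 0 ≤ y) (hz : 0 ≤ z) : 0 ≤ potential (x, y, z) :=
  div_nonneg (by push_cast; positivity) (phi_nonneg hx hz)

lemma potential_of_lt (h : x < z) (hz : z ≠ 0) : potential (x, y, z) = x * y := by
  have : (z : ℝ) ≠ 0 := by exact_mod_cast hz
  simp only [potential, phi, h.ne, if_false, max_eq_right (Int.cast_le.mpr h.le)]
  push_cast
  field_simp

lemma potential_of_gt (h : z < x) (hx : x ≠ 0) : potential (x, y, z) = y * z := by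
  have : (x : ℝ) ≠ 0 := by exact_mod_cast hx
  simp only [potential, phi, h.ne', if_false, max_eq_left (Int.cast_le.mpr h.le)]
  push_cast
  field_simp

lemma potential_diag (hx : x ≠ 0) : potential (x, y, x) = x * y - y / 2 := by
  have : (x : ℝ) ≠ 0 := by exact_mod_cast hx
  -- `2x - 1` is odd, so never zero
  have : (2 * x - 1 : ℝ) ≠ 0 := by exact_mod_cast (by omega : 2 * x - 1 ≠ 0)
  simp only [potential, phi, if_true]
  push_cast
  field_simp

lemma sum_steps_add_eq (f : ℤ × ℤ × ℤ → ℝ) (p : ℤ × ℤ × ℤ) :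
    ∑ v ∈ steps, f (p + v) = f (p.1 - 1, p.2.1, p.2.2) + f (p.1 + 1, p.2.1 - 1, p.2.2)
      + f (p.1, p.2.1 + 1, p.2.2 - 1) + f (p.1, p.2.1, p.2.2 + 1) := by
  obtain ⟨x, y, z⟩ := p
  simp [steps, Prod.mk_add_mk, sub_eq_add_neg, add_assoc]

theorem sum_steps_potential_add_one_le (hx : 1 ≤ x) (hy : 1 ≤ y) (hz : 1 ≤ z) :
    ∑ v ∈ steps, potential ((x, y, z) + v) + 1 ≤ 4 * potential (x, y, z) := by
  rw [sum_steps_add_eq]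
  dsimp only
  have hy' : (1 : ℝ) ≤ y := by exact_mod_cast hy
  rcases (by omega : x + 2 ≤ z ∨ z = x + 1 ∨ z = x ∨ x = z + 1 ∨ z + 2 ≤ x)
    with h | rfl | rfl | rfl | h
  · rw [potential_of_lt (by omega) (by omega), potential_of_lt (by omega) (by omega),
      potential_of_lt (by omega) (by omega), potential_of_lt (by omega) (by omega),
      potential_of_lt (by omega) (by omega)]
    push_cast; linarith
  · rw [potential_of_lt (by omega) (by omega), add_sub_cancel_right, potential_diag (by omega),
      potential_diag (by omega), potential_of_lt (by omega) (by omega),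
      potential_of_lt (by omega) (by omega)]
    push_cast; linarith
  · rw [potential_of_lt (by omega) (by omega), potential_of_gt (by omega) (by omega),
      potential_of_gt (by omega) (by omega), potential_of_lt (by omega) (by omega),
      potential_diag (by omega)]
    push_cast; linarith
  · rw [add_sub_cancel_right, potential_diag (by omega), potential_of_gt (by omega) (by omega),
      potential_of_gt (by omega) (by omega), potential_diag (by omega),
      potential_of_gt (by omega) (by omega)]
    push_cast; linarith
  · rw [potential_of_gt (by omega) (by omega), potential_of_gt (by omega) (by omega),
      potential_of_gt (by omega) (by omega), potential_of_gt (by omega) (by omega),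
      potential_of_gt (by omega) (by omega)]
    push_cast; linarith

end Potential

section CondExp

variable {Ω γ : Type*} {m m₀ : MeasurableSpace Ω} {μ : Measure[m₀] Ω}
  [MeasurableSpace γ] [MeasurableSingletonClass γ] {Z : Ω → γ}

lemma ae_mem_of_sum_measure_eq_one [IsProbabilityMeasure μ] (hZ : Measurable Z) {S : Finset γ}
    (h : ∑ v ∈ S, μ {ω | Z ω = v} = 1) : ∀ᵐ ω ∂μ, Z ω ∈ S := by
  refine (mem_ae_iff_prob_eq_one (hZ S.measurableSet)).2 ?_
  rwa [← sum_measure_preimage_singleton S fun v _ => hZ (measurableSet_singleton v)]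

theorem condExp_eval_indep_ae_eq_sum [IsFiniteMeasure μ] (hm : m ≤ m₀) (hZ : Measurable Z)
    (hind : Indep (MeasurableSpace.comap Z ‹_›) m μ) {S : Finset γ} (hS : ∀ᵐ ω ∂μ, Z ω ∈ S)
    {h : γ → Ω → ℝ} (hmeas : ∀ v ∈ S, StronglyMeasurable[m] (h v))
    (hint : ∀ v ∈ S, Integrable (h v) μ) :
    μ[fun ω => h (Z ω) ω | m] =ᵐ[μ] fun ω => ∑ v ∈ S, μ.real {ω | Z ω = v} * h v ω := by
  classical
  set I : γ → Ω → ℝ := fun v => {ω | Z ω = v}.indicator 1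
  have hI : ∀ v, MeasurableSet {ω | Z ω = v} := fun v => hZ (measurableSet_singleton v)
  have hsplit : (fun ω => h (Z ω) ω) =ᵐ[μ] ∑ v ∈ S, h v * I v := by
    filter_upwards [hS] with ω hω
    simp [I, Set.indicator_apply, hω]
  have hIce : ∀ v, μ[I v | m] =ᵐ[μ] fun _ => μ.real {ω | Z ω = v} := by
    intro v
    refine (condExp_indep_eq hZ.comap_le hm
      (stronglyMeasurable_one.indicator ⟨{v}, measurableSet_singleton v, rfl⟩) hind).trans ?_
    filter_upwards with ω
    exact integral_indicator_one (hI v)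
  have hprod : ∀ v ∈ S, Integrable (h v * I v) μ := fun v hv => by
    have : h v * I v = {ω | Z ω = v}.indicator (h v) := by
      funext ω
      simp [I, Set.indicator_apply]
    exact this ▸ (hint v hv).indicator (hI v)
  have hpull : ∀ v ∈ S, μ[h v * I v | m] =ᵐ[μ] fun ω => μ.real {ω | Z ω = v} * h v ω := by
    intro v hv
    filter_upwards [condExp_mul_of_stronglyMeasurable_left (hmeas v hv) (hprod v hv)
      ((integrable_const 1).indicator (hI v)), hIce v] with ω h₁ h₂
    rw [h₁, Pi.mul_apply, h₂, mul_comm]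
  refine (condExp_congr_ae hsplit).trans ((condExp_finsetSum hprod m).trans ?_)
  filter_upwards [(Filter.eventually_all_finset S).2 hpull] with ω hω
  simp only [Finset.sum_apply]
  exact Finset.sum_congr rfl hω

end CondExp

section NoiseFiltration

variable {Ω γ : Type*} [MeasurableSpace γ] {ξ : ℕ → Ω → γ}

abbrev noiseFiltration (ξ : ℕ → Ω → γ) (n : ℕ) : MeasurableSpace Ω :=
  ⨆ k ∈ Finset.range n, MeasurableSpace.comap (ξ k) inferInstance

lemma noiseFiltration_le [MeasurableSpace Ω] (hξ : ∀ k, Measurable (ξ k)) (n : ℕ) :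
    noiseFiltration ξ n ≤ ‹MeasurableSpace Ω› :=
  iSup₂_le fun k _ => (hξ k).comap_le

lemma measurable_noiseFiltration {k n : ℕ} (hk : k < n) :
    Measurable[noiseFiltration ξ n] (ξ k) :=
  measurable_iff_comap_le.2 <| le_iSup₂_of_le k (Finset.mem_range.2 hk) le_rfl

lemma indep_comap_noiseFiltration [MeasurableSpace Ω] {μ : Measure Ω} (hξ : ∀ k, Measurable (ξ k))
    (hindep : iIndepFun ξ μ) (n : ℕ) :
    Indep (MeasurableSpace.comap (ξ n) inferInstance) (noiseFiltration ξ n) μ := by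
  have h := indep_iSup_of_disjoint (fun k => (hξ k).comap_le) hindep.iIndep
    (S := {n}) (T := ↑(Finset.range n)) (by simp)
  simpa [noiseFiltration] using h

end NoiseFiltration

section DrivenChain

variable {Ω α γ : Type*}

def drivenChain (step : α → γ → α) (w₀ : α) (ξ : ℕ → Ω → γ) : ℕ → Ω → α
  | 0 => fun _ => w₀
  | n + 1 => fun ω => step (drivenChain step w₀ ξ n ω) (ξ n ω)

variable {step : α → γ → α} {w₀ : α} {ξ : ℕ → Ω → γ} {m₀ : MeasurableSpace Ω} {μ : Measure[m₀] Ω}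

lemma measurable_drivenChain [MeasurableSpace α] [MeasurableSpace γ]
    (hstep : Measurable (Function.uncurry step)) {m : MeasurableSpace Ω} {n : ℕ}
    (hξ : ∀ k < n, Measurable[m] (ξ k)) : Measurable[m] (drivenChain step w₀ ξ n) := by
  induction n with
  | zero => exact measurable_const
  | succ n ih =>
    exact hstep.comp ((ih fun k hk => hξ k (by omega)).prodMk (hξ n (by omega)))

lemma ae_drivenChain_mem {R : Set α} {S : Set γ} (hR : ∀ w ∈ R, ∀ v ∈ S, step w v ∈ R)
    (h₀ : w₀ ∈ R) (hS : ∀ k, ∀ᵐ ω ∂μ, ξ k ω ∈ S) (n : ℕ) :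
    ∀ᵐ ω ∂μ, drivenChain step w₀ ξ n ω ∈ R := by
  induction n with
  | zero => exact .of_forall fun _ => h₀
  | succ n ih =>
    filter_upwards [ih, hS n] with ω hω hξω using hR _ hω _ hξω

lemma exists_finset_ae_drivenChain_mem {S : Finset γ} (hS : ∀ k, ∀ᵐ ω ∂μ, ξ k ω ∈ S)
    (n : ℕ) : ∃ F : Finset α, ∀ᵐ ω ∂μ, drivenChain step w₀ ξ n ω ∈ F := by
  classical
  induction n with
  | zero => exact ⟨{w₀}, .of_forall fun _ => Finset.mem_singleton_self w₀⟩
  | succ n ih =>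
    obtain ⟨F, hF⟩ := ih
    refine ⟨(F ×ˢ S).image fun p => step p.1 p.2, ?_⟩
    filter_upwards [hF, hS n] with ω hω hξω
    exact Finset.mem_image.2 ⟨(_, ξ n ω), Finset.mem_product.2 ⟨hω, hξω⟩, rfl⟩

lemma integrable_of_ae_mem_finset {f : Ω → ℝ} {Y : Ω → α} {g : α → ℝ} [IsFiniteMeasure μ]
    (hf : AEStronglyMeasurable f μ) (hfY : ∀ ω, f ω = g (Y ω)) {F : Finset α}
    (hF : ∀ᵐ ω ∂μ, Y ω ∈ F) : Integrable f μ := by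
  refine .of_bound hf (∑ w ∈ F, |g w|) ?_
  filter_upwards [hF] with ω hω
  rw [hfY, Real.norm_eq_abs]
  exact Finset.single_le_sum (f := fun w => |g w|) (fun _ _ => abs_nonneg _) hω

theorem condExp_drivenChain_succ_le [MeasurableSpace α] [Countable α] [MeasurableSingletonClass α]
    [MeasurableSpace γ] [MeasurableSingletonClass γ] [IsProbabilityMeasure μ]
    {m : MeasurableSpace Ω} (hm : m ≤ m₀) {n : ℕ} (hW : Measurable[m] (drivenChain step w₀ ξ n))
    (hξ : Measurable[m₀] (ξ n)) (hind : Indep (MeasurableSpace.comap (ξ n) inferInstance) m μ)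
    {S : Finset γ} (hS : ∀ k, ∀ᵐ ω ∂μ, ξ k ω ∈ S) {R : Set α}
    (hR : ∀ᵐ ω ∂μ, drivenChain step w₀ ξ n ω ∈ R) {V : α → ℝ}
    (hdrift : ∀ w ∈ R, ∑ v ∈ S, μ.real {ω | ξ n ω = v} * V (step w v) ≤ V w) :
    μ[fun ω => V (drivenChain step w₀ ξ (n + 1) ω) | m]
      ≤ᵐ[μ] fun ω => V (drivenChain step w₀ ξ n ω) := by
  obtain ⟨F, hF⟩ := exists_finset_ae_drivenChain_mem (step := step) (w₀ := w₀) hS n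
  have hmeas : ∀ v, Measurable[m] fun ω => V (step (drivenChain step w₀ ξ n ω) v) :=
    fun v => (measurable_of_countable fun w => V (step w v)).comp hW
  have hcond := condExp_eval_indep_ae_eq_sum hm hξ hind (hS n)
    (h := fun v ω => V (step (drivenChain step w₀ ξ n ω) v))
    (fun v _ => (hmeas v).stronglyMeasurable)
    (fun v _ => integrable_of_ae_mem_finset ((hmeas v).mono hm le_rfl).aestronglyMeasurable
      (g := fun w => V (step w v)) (fun _ => rfl) hF)
  filter_upwards [hcond, hR] with ω hω hωR
  exact hω.trans_le (hdrift _ hωR)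

end DrivenChain

lemma measure_eq_zero_of_integral_le_of_le_mul {Ω : Type*} [MeasurableSpace Ω] {μ : Measure Ω}
    [IsFiniteMeasure μ] {f : ℕ → Ω → ℝ} {E : Set Ω} {C ε : ℝ} (hε : 0 < ε)
    (hf : ∀ n, 0 ≤ᵐ[μ] f n) (hfi : ∀ n, Integrable (f n) μ) (hC : ∀ n, ∫ ω, f n ω ∂μ ≤ C)
    (hE : ∀ n, ∀ᵐ ω ∂μ, ω ∈ E → ε * n ≤ f n ω) : μ E = 0 := by
  have hbound : ∀ n : ℕ, ε * n * μ.real E ≤ C := fun n =>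
    calc ε * n * μ.real E ≤ ε * n * μ.real {ω | ε * n ≤ f n ω} :=
          mul_le_mul_of_nonneg_left
            (ENNReal.toReal_mono (measure_ne_top μ _) (measure_mono_ae (hE n))) (by positivity)
      _ ≤ C := (mul_meas_ge_le_integral_of_nonneg (hf n) (hfi n) _).trans (hC n)
  by_contra hpos
  have hpos : 0 < μ.real E := ENNReal.toReal_pos hpos (measure_ne_top μ E)
  obtain ⟨n, hn⟩ := exists_nat_gt (C / (ε * μ.real E))
  rw [div_lt_iff₀ (by positivity)] at hn
  linarith [hbound n]

section StoppedWalk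

open Classical in
noncomputable def stopStep {G : Type*} [Add G] (Z : Set G) (s : G × ℕ) (v : G) : G × ℕ :=
  if s.1 ∈ Z then s else (s.1 + v, s.2 + 1)

theorem drivenChain_stopStep_eq {Ω G : Type*} [Add G] {Z : Set G} {ξ X : ℕ → Ω → G} {x₀ : G}
    (hX0 : ∀ ω, X 0 ω = x₀) (hX : ∀ n ω, X (n + 1) ω = X n ω + ξ n ω) {ω : Ω} {n t : ℕ}
    (hbefore : ∀ j < min n t, X j ω ∉ Z) (hhit : t < n → X t ω ∈ Z) :
    drivenChain (stopStep Z) (x₀, 0) ξ n ω = (X (min n t) ω, min n t) := by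
  induction n with
  | zero => simp [drivenChain, hX0]
  | succ n ih =>
    have ih := ih (fun j hj => hbefore j (by omega)) (fun h => hhit (by omega))
    change stopStep Z (drivenChain (stopStep Z) (x₀, 0) ξ n ω) (ξ n ω) = _
    rw [ih, stopStep]
    rcases le_or_gt t n with htn | hnt
    · rw [min_eq_right htn, min_eq_right (by omega), if_pos (hhit (by omega))]
    · rw [min_eq_left hnt.le, min_eq_left hnt, if_neg (hbefore n (by omega)), hX]

theorem drivenChain_stopStep_eq_sInf {Ω G : Type*} [Add G] {Z : Set G} {ξ X : ℕ → Ω → G}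
    {x₀ : G} (hX0 : ∀ ω, X 0 ω = x₀) (hX : ∀ n ω, X (n + 1) ω = X n ω + ξ n ω) {ω : Ω}
    (hhit : ∃ k, X k ω ∈ Z) (n : ℕ) :
    drivenChain (stopStep Z) (x₀, 0) ξ n ω =
      (X (min n (sInf {k | X k ω ∈ Z})) ω, min n (sInf {k | X k ω ∈ Z})) :=
  drivenChain_stopStep_eq hX0 hX (fun _ hj => Nat.notMem_of_lt_sInf (lt_min_iff.1 hj).2)
    fun _ => Nat.sInf_mem hhit

def coordPlanes : Set (ℤ × ℤ × ℤ) := {p | p.1 * p.2.1 * p.2.2 = 0}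

noncomputable def clockedPotential (s : (ℤ × ℤ × ℤ) × ℕ) : ℝ := potential s.1 + s.2 / 4

lemma one_le_of_nonneg_of_notMem_coordPlanes {p : ℤ × ℤ × ℤ} (hp : 0 ≤ p)
    (hZ : p ∉ coordPlanes) : 1 ≤ p.1 ∧ 1 ≤ p.2.1 ∧ 1 ≤ p.2.2 := by
  obtain ⟨x, y, z⟩ := p
  simp only [coordPlanes, Set.mem_ofPred_eq, mul_eq_zero, not_or] at hZ
  simp only [Prod.le_def, Prod.fst_zero, Prod.snd_zero] at hp
  dsimp only at hZ hp ⊢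
  omega

lemma nonneg_stopStep {s : (ℤ × ℤ × ℤ) × ℕ} (hs : 0 ≤ s.1) {v : ℤ × ℤ × ℤ} (hv : v ∈ steps) :
    0 ≤ (stopStep coordPlanes s v).1 := by
  unfold stopStep
  split_ifs with hZ
  · exact hs
  obtain ⟨hx, hy, hz⟩ := one_le_of_nonneg_of_notMem_coordPlanes hs hZ
  simp only [steps, Finset.mem_insert, Finset.mem_singleton] at hv
  rcases hv with rfl | rfl | rfl | rfl <;>
    simp only [Prod.le_def, Prod.fst_add, Prod.snd_add, Prod.fst_zero, Prod.snd_zero] <;> omega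

theorem sum_steps_clockedPotential_stopStep_le {s : (ℤ × ℤ × ℤ) × ℕ} (hs : 0 ≤ s.1) :
    ∑ v ∈ steps, 1 / 4 * clockedPotential (stopStep coordPlanes s v) ≤ clockedPotential s := by
  have hcard : steps.card = 4 := rfl
  by_cases hZ : s.1 ∈ coordPlanes
  · simp only [stopStep, if_pos hZ, Finset.sum_const, hcard, nsmul_eq_mul]
    linarith
  obtain ⟨hx, hy, hz⟩ := one_le_of_nonneg_of_notMem_coordPlanes hs hZ
  obtain ⟨⟨x, y, z⟩, t⟩ := s
  have hdrift := sum_steps_potential_add_one_le hx hy hz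
  simp only [stopStep, if_neg hZ, clockedPotential, mul_add, Finset.sum_add_distrib,
    ← Finset.mul_sum, Finset.sum_const, hcard, nsmul_eq_mul]
  push_cast
  linarith

end StoppedWalk

section RandomWalk

variable {Ω : Type*} [MeasurableSpace Ω] {μ : Measure Ω}
  {ξ : ℕ → Ω → ℤ × ℤ × ℤ} {x₀ : ℤ × ℤ × ℤ}

/-- The walk started at `x₀` with steps `ξ`, stopped on the coordinate planes, together with
its clock: at time `n` it is `(X (min n T), min n T)` (`drivenChain_stopStep_eq_sInf`), so
`clockedPotential` of it is the process `M (min n T)`. -/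
noncomputable abbrev stoppedWalk (x₀ : ℤ × ℤ × ℤ) (ξ : ℕ → Ω → ℤ × ℤ × ℤ) :
    ℕ → Ω → (ℤ × ℤ × ℤ) × ℕ :=
  drivenChain (stopStep coordPlanes) (x₀, 0) ξ

lemma ae_nonneg_stoppedWalk (hx₀ : 0 ≤ x₀) (hS : ∀ k, ∀ᵐ ω ∂μ, ξ k ω ∈ steps) (n : ℕ) :
    ∀ᵐ ω ∂μ, 0 ≤ (stoppedWalk x₀ ξ n ω).1 :=
  ae_drivenChain_mem (R := {s : (ℤ × ℤ × ℤ) × ℕ | 0 ≤ s.1}) (S := ↑steps)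
    (fun _ hs _ hv => nonneg_stopStep hs hv) hx₀ hS n

variable [IsProbabilityMeasure μ]

lemma integrable_clockedPotential_stoppedWalk (hξ : ∀ k, Measurable (ξ k))
    (hS : ∀ k, ∀ᵐ ω ∂μ, ξ k ω ∈ steps) (n : ℕ) :
    Integrable (fun ω => clockedPotential (stoppedWalk x₀ ξ n ω)) μ := by
  obtain ⟨F, hF⟩ := exists_finset_ae_drivenChain_mem (step := stopStep coordPlanes)
    (w₀ := (x₀, 0)) hS n
  exact integrable_of_ae_mem_finset ((measurable_of_countable clockedPotential).comp
    (measurable_drivenChain (measurable_of_countable _) fun k _ => hξ k)).aestronglyMeasurable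
    (fun _ => rfl) hF

variable (hξ : ∀ k, Measurable (ξ k)) (hindep : iIndepFun ξ μ)
  (hunif : ∀ k, ∀ v ∈ steps, μ.real {ω | ξ k ω = v} = 1 / 4)
  (hS : ∀ k, ∀ᵐ ω ∂μ, ξ k ω ∈ steps) (hx₀ : 0 ≤ x₀)
include hξ hindep hunif hS hx₀

theorem condExp_clockedPotential_stoppedWalk_succ_le (n : ℕ) :
    μ[fun ω => clockedPotential (stoppedWalk x₀ ξ (n + 1) ω) | noiseFiltration ξ n]
      ≤ᵐ[μ] fun ω => clockedPotential (stoppedWalk x₀ ξ n ω) :=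
  condExp_drivenChain_succ_le (noiseFiltration_le hξ n)
    (measurable_drivenChain (measurable_of_countable _) fun _ hk => measurable_noiseFiltration hk)
    (hξ n) (indep_comap_noiseFiltration hξ hindep n) hS (ae_nonneg_stoppedWalk hx₀ hS n)
    fun s hs => by
      rw [Finset.sum_congr rfl fun v hv => by rw [hunif n v hv]]
      exact sum_steps_clockedPotential_stopStep_le hs

theorem integral_clockedPotential_stoppedWalk_le (n : ℕ) :
    ∫ ω, clockedPotential (stoppedWalk x₀ ξ n ω) ∂μ ≤ potential x₀ := by
  induction n with
  | zero => simp [stoppedWalk, drivenChain, clockedPotential]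
  | succ n ih =>
    calc ∫ ω, clockedPotential (stoppedWalk x₀ ξ (n + 1) ω) ∂μ
        = ∫ ω, (μ[fun ω => clockedPotential (stoppedWalk x₀ ξ (n + 1) ω) |
            noiseFiltration ξ n]) ω ∂μ :=
          (integral_condExp (noiseFiltration_le hξ n)).symm
      _ ≤ ∫ ω, clockedPotential (stoppedWalk x₀ ξ n ω) ∂μ :=
          integral_mono_ae integrable_condExp (integrable_clockedPotential_stoppedWalk hξ hS n)
            (condExp_clockedPotential_stoppedWalk_succ_le hξ hindep hunif hS hx₀ n)
      _ ≤ potential x₀ := ih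

theorem ae_exists_mem_coordPlanes {X : ℕ → Ω → ℤ × ℤ × ℤ} (hX0 : ∀ ω, X 0 ω = x₀)
    (hX : ∀ n ω, X (n + 1) ω = X n ω + ξ n ω) : ∀ᵐ ω ∂μ, ∃ k, X k ω ∈ coordPlanes := by
  have hnull : μ {ω | ∀ k, X k ω ∉ coordPlanes} = 0 := by
    refine measure_eq_zero_of_integral_le_of_le_mul (by norm_num : (0 : ℝ) < 1 / 4)
      (fun n => ?_) (integrable_clockedPotential_stoppedWalk hξ hS)
      (integral_clockedPotential_stoppedWalk_le hξ hindep hunif hS hx₀) fun n => ?_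
    · filter_upwards [ae_nonneg_stoppedWalk hx₀ hS n] with ω hω
      exact add_nonneg (potential_nonneg hω.1 hω.2.1 hω.2.2) (by positivity)
    · filter_upwards [ae_nonneg_stoppedWalk hx₀ hS n] with ω hω hE
      have hW : stoppedWalk x₀ ξ n ω = (X n ω, n) := by
        simpa only [min_self] using drivenChain_stopStep_eq hX0 hX (ω := ω) (n := n) (t := n)
          (fun j _ => hE j) (fun h => absurd h (lt_irrefl n))
      rw [hW] at hω ⊢
      have := potential_nonneg hω.1 hω.2.1 hω.2.2
      simp only [clockedPotential]
      linarith
  filter_upwards [measure_eq_zero_iff_ae_notMem.1 hnull] with ω hω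
  simpa using hω

end RandomWalk

theorem stmt_15_general (a b c : ℕ)
{Ω : Type*} [MeasurableSpace Ω] (μ : Measure Ω) [IsProbabilityMeasure μ]
    (ξ : ℕ → Ω → ℤ × ℤ × ℤ)
    (hmeas : ∀ n, Measurable (ξ n))
    (hindep : iIndepFun ξ μ)
    (hunif : ∀ n, ∀ v ∈ ({(-1, 0, 0), (1, -1, 0), (0, 1, -1), (0, 0, 1)} : Set (ℤ × ℤ × ℤ)),
      μ {ω | ξ n ω = v} = 1 / 4)
    (A B C : ℕ → Ω → ℤ)
    (hA : ∀ n ω, A (n + 1) ω = A n ω + (ξ n ω).1)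
    (hB : ∀ n ω, B (n + 1) ω = B n ω + (ξ n ω).2.1)
    (hC : ∀ n ω, C (n + 1) ω = C n ω + (ξ n ω).2.2)
    (T : Ω → ℕ)
    (hT : ∀ ω, T ω = sInf {n | A n ω * B n ω * C n ω = 0})
    (hA0 : ∀ ω, A 0 ω = (a : ℤ)) (hB0 : ∀ ω, B 0 ω = (b : ℤ)) (hC0 : ∀ ω, C 0 ω = (c : ℤ))
    (ℱ : ℕ → MeasurableSpace Ω)
    (hℱ : ∀ n, ℱ n = ⨆ k ∈ Finset.range n, MeasurableSpace.comap (ξ k) inferInstance)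
    (M : ℕ → Ω → ℝ)
    (hM : ∀ n ω, M n ω = ((A n ω * B n ω * C n ω : ℤ) : ℝ) / phi (A n ω) (C n ω)
      + (n : ℝ) / 4) :
    ∀ n : ℕ, μ[fun ω => M (min (n + 1) (T ω)) ω|ℱ n]
      ≤ᵐ[μ] fun ω => M (min n (T ω)) ω := by
  obtain rfl : ℱ = noiseFiltration ξ := funext hℱ
  set X : ℕ → Ω → ℤ × ℤ × ℤ := fun n ω => (A n ω, B n ω, C n ω)
  have hX0 : ∀ ω, X 0 ω = ((a : ℤ), (b : ℤ), (c : ℤ)) := fun ω => by simp [X, hA0, hB0, hC0]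
  have hX : ∀ n ω, X (n + 1) ω = X n ω + ξ n ω := fun n ω => by simp [X, hA, hB, hC, Prod.ext_iff]
  have hunif' : ∀ k, ∀ v ∈ steps, μ {ω | ξ k ω = v} = 1 / 4 :=
    fun k v hv => hunif k v (by simpa [steps] using hv)
  have hS : ∀ k, ∀ᵐ ω ∂μ, ξ k ω ∈ steps := fun k =>
    ae_mem_of_sum_measure_eq_one (hmeas k) (by
      rw [Finset.sum_congr rfl (hunif' k)]
      simpa [steps] using ENNReal.mul_inv_cancel (by norm_num) (by norm_num))
  have hunifReal : ∀ k, ∀ v ∈ steps, μ.real {ω | ξ k ω = v} = 1 / 4 := fun k v hv => by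
    simp [measureReal_def, hunif' k v hv]
  have hx₀ : (0 : ℤ × ℤ × ℤ) ≤ ((a : ℤ), (b : ℤ), (c : ℤ)) := by simp [Prod.le_def]
  have hstopped : ∀ n, (fun ω => M (min n (T ω)) ω) =ᵐ[μ]
      fun ω => clockedPotential (stoppedWalk ((a : ℤ), (b : ℤ), (c : ℤ)) ξ n ω) := fun n => by
    filter_upwards [ae_exists_mem_coordPlanes hmeas hindep hunifReal hS hx₀ hX0 hX] with ω hω
    rw [hM, hT ω, show stoppedWalk _ ξ n ω = _ from drivenChain_stopStep_eq_sInf hX0 hX hω n]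
    rfl
  intro n
  exact (condExp_congr_ae (hstopped (n + 1))).trans_le
    ((condExp_clockedPotential_stoppedWalk_succ_le hmeas hindep hunifReal hS hx₀ n).trans_eq
      (hstopped n).symm)

/-- With `M n = A n * B n * C n / φ (A n, C n) + n / 4`, the stopped
process `n ↦ M (min (n, T))` is a supermartingale with respect to the filtration
generated by the steps: `E[M (min (n+1, T)) | ℱ n] ≤ M (min (n, T))` a.s. for all `n`. -/
theorem stmt_15 (a b c : ℕ) (ha : 0 < a) (hb : 0 < b) (hc : 0 < c)
{Ω : Type*} [MeasurableSpace Ω] (μ : Measure Ω) [IsProbabilityMeasure μ]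
    (ξ : ℕ → Ω → ℤ × ℤ × ℤ)
    (hmeas : ∀ n, Measurable (ξ n))
    (hindep : iIndepFun ξ μ)
    (hunif : ∀ n, ∀ v ∈ ({(-1, 0, 0), (1, -1, 0), (0, 1, -1), (0, 0, 1)} : Set (ℤ × ℤ × ℤ)),
      μ {ω | ξ n ω = v} = 1 / 4)
    (A B C : ℕ → Ω → ℤ)
    (hA : ∀ n ω, A (n + 1) ω = A n ω + (ξ n ω).1)
    (hB : ∀ n ω, B (n + 1) ω = B n ω + (ξ n ω).2.1)
    (hC : ∀ n ω, C (n + 1) ω = C n ω + (ξ n ω).2.2)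
    (T : Ω → ℕ)
    (hT : ∀ ω, T ω = sInf {n | A n ω * B n ω * C n ω = 0})
    (hA0 : ∀ ω, A 0 ω = (a : ℤ)) (hB0 : ∀ ω, B 0 ω = (b : ℤ)) (hC0 : ∀ ω, C 0 ω = (c : ℤ))
    (ℱ : ℕ → MeasurableSpace Ω)
    (hℱ : ∀ n, ℱ n = ⨆ k ∈ Finset.range n, MeasurableSpace.comap (ξ k) inferInstance)
    (M : ℕ → Ω → ℝ)
    (hM : ∀ n ω, M n ω = ((A n ω * B n ω * C n ω : ℤ) : ℝ) / phi (A n ω) (C n ω)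
      + (n : ℝ) / 4) :
    ∀ n : ℕ, μ[fun ω => M (min (n + 1) (T ω)) ω|ℱ n]
      ≤ᵐ[μ] fun ω => M (min n (T ω)) ω :=
  stmt_15_general a b c μ ξ hmeas hindep hunif A B C hA hB hC T hT hA0 hB0 hC0 ℱ hℱ M hM
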